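/- arXiv:1102.3975 — 2 statements merged into one kernel-verified Lean document; each statement's English description precedes it below -/
import Mathlib

section
/- Let C be a real symmetric positive semidefinite n×n matrix whose diagonal entries satisfy 0 < C_{ii} ≤ 1 for all i, and let D be the diagonal matrix with entries D_{ii} = (C_{ii})^{-1/2}. Then the smallest eigenvalue of C is at most the smallest eigenvalue of D C D (the correlation matrix obtained by normalizing each variable to unit variance). -/
open scoped Matrix

/-- The smallest eigenvalue of a real symmetric (Hermitian) matrix. -/
noncomputable def lambdaMin {m : Type*} [Fintype m] [DecidableEq m] (A : Matrix m m ℝ) : ℝ :=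
  if hA : A.IsHermitian then ⨅ i, hA.eigenvalues i else 0

/-- The largest eigenvalue of a real symmetric (Hermitian) matrix. -/
noncomputable def lambdaMax {m : Type*} [Fintype m] [DecidableEq m] (A : Matrix m m ℝ) : ℝ :=
  if hA : A.IsHermitian then ⨆ i, hA.eigenvalues i else 0

/-- The principal submatrix of `C` on rows and columns in `S`. -/
def subMat {ι : Type*} (C : Matrix ι ι ℝ) (S : Finset ι) : Matrix S S ℝ :=
  fun i j => C i j

/-- `R²(S) = b_Sᵀ (C_S)⁻¹ b_S`, the squared multiple correlation. -/
noncomputable def R2 {ι : Type*} [Fintype ι] [DecidableEq ι]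
    (C : Matrix ι ι ℝ) (b : ι → ℝ) (S : Finset ι) : ℝ :=
  (fun i : S => b i) ⬝ᵥ (subMat C S)⁻¹ *ᵥ (fun i : S => b i)

/-- `λmin(C,k)`: the smallest eigenvalue of any `k × k` principal submatrix of `C`. -/
noncomputable def lambdaMinK {n : ℕ} (C : Matrix (Fin n) (Fin n) ℝ) (k : ℕ) : ℝ :=
  sInf {x | ∃ S : Finset (Fin n), S.card = k ∧ x = lambdaMin (subMat C S)}

/-- `λmax(C,k)`: the largest eigenvalue of any `k × k` principal submatrix of `C`. -/
noncomputable def lambdaMaxK {n : ℕ} (C : Matrix (Fin n) (Fin n) ℝ) (k : ℕ) : ℝ :=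
  sSup {x | ∃ S : Finset (Fin n), S.card = k ∧ x = lambdaMax (subMat C S)}

/-- `Cov(Res(Z|S), X_m) = b_m - C_{m,S} (C_S)⁻¹ b_S`. -/
noncomputable def resCov {ι : Type*} [Fintype ι] [DecidableEq ι]
    (C : Matrix ι ι ℝ) (b : ι → ℝ) (S : Finset ι) (m : ι) : ℝ :=
  b m - (fun i : S => C m i) ⬝ᵥ ((subMat C S)⁻¹ *ᵥ (fun i : S => b i))

/-! If `D C D v = μ v` with `v ⬝ᵥ v = 1`, then `μ = (D v) ⬝ᵥ C (D v) ≥ λ_min(C) ‖D v‖²`, and since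
every diagonal entry of `D` is at least `1` and `λ_min(C) ≥ 0`, this is at least `λ_min(C)`. -/

open Matrix
open scoped ComplexOrder

lemma Matrix.IsHermitian.posSemidef_sub_smul_one {n 𝕜 : Type*} [Fintype n] [DecidableEq n]
    [RCLike 𝕜] {A : Matrix n n 𝕜} (hA : A.IsHermitian) {c : ℝ}
    (hc : ∀ i, c ≤ hA.eigenvalues i) : (A - (c : 𝕜) • 1).PosSemidef := by
  have hdiag : diagonal (RCLike.ofReal ∘ (hA.eigenvalues - fun _ => c)) =
      diagonal (RCLike.ofReal ∘ hA.eigenvalues) - (c : 𝕜) • (1 : Matrix n n 𝕜) := by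
    ext i j
    by_cases h : i = j <;> simp [h, Algebra.algebraMap_eq_smul_one]
  have hconj : A - (c : 𝕜) • 1 = Unitary.conjStarAlgAut 𝕜 _ hA.eigenvectorUnitary
      (diagonal (RCLike.ofReal ∘ (hA.eigenvalues - fun _ => c))) := by
    rw [hdiag, map_sub, map_smul, map_one, ← hA.spectral_theorem]
  rw [hconj, Unitary.conjStarAlgAut_apply,
    Unitary.isUnit_coe.posSemidef_star_right_conjugate_iff, posSemidef_diagonal_iff]
  intro i
  simpa using hc i

section

variable {m : Type*} [Fintype m] [DecidableEq m] {A : Matrix m m ℝ}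

lemma lambdaMin_le_eigenvalues (hA : A.IsHermitian) (i : m) : lambdaMin A ≤ hA.eigenvalues i := by
  rw [lambdaMin, dif_pos hA]
  exact ciInf_le (Finite.bddBelow_range _) i

lemma Matrix.PosSemidef.lambdaMin_nonneg (hA : A.PosSemidef) : 0 ≤ lambdaMin A := by
  rw [lambdaMin, dif_pos hA.1]
  exact Real.iInf_nonneg hA.eigenvalues_nonneg

lemma lambdaMin_mul_dotProduct_self_le (hA : A.IsHermitian) (x : m → ℝ) :
    lambdaMin A * (x ⬝ᵥ x) ≤ x ⬝ᵥ A *ᵥ x := by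
  have := (hA.posSemidef_sub_smul_one (lambdaMin_le_eigenvalues hA)).dotProduct_mulVec_nonneg x
  simpa [sub_mulVec, smul_mulVec, dotProduct_sub, sub_nonneg] using this

lemma le_lambdaMin_of_forall_mul_dotProduct_self_le [Nonempty m] (hA : A.IsHermitian) {c : ℝ}
    (h : ∀ x, c * (x ⬝ᵥ x) ≤ x ⬝ᵥ A *ᵥ x) : c ≤ lambdaMin A := by
  rw [lambdaMin, dif_pos hA]
  refine le_ciInf fun i => ?_
  have hv : (hA.eigenvectorBasis i).ofLp ⬝ᵥ (hA.eigenvectorBasis i).ofLp = 1 := by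
    have := orthonormal_iff_ite.mp hA.eigenvectorBasis.orthonormal i i
    rwa [if_pos rfl, EuclideanSpace.inner_eq_star_dotProduct, star_trivial] at this
  simpa [hA.mulVec_eigenvectorBasis, hv] using h (hA.eigenvectorBasis i).ofLp

lemma dotProduct_self_le_diagonal_mulVec {d : m → ℝ} (hd : ∀ i, 1 ≤ |d i|) (x : m → ℝ) :
    x ⬝ᵥ x ≤ (diagonal d *ᵥ x) ⬝ᵥ (diagonal d *ᵥ x) := by
  refine Finset.sum_le_sum fun i _ => ?_
  have hsq : 1 ≤ d i ^ 2 := (one_le_sq_iff_one_le_abs _).mpr (hd i)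
  rw [mulVec_diagonal]
  nlinarith [mul_self_nonneg (x i)]

lemma one_le_inv_sqrt {c : ℝ} (h0 : 0 < c) (h1 : c ≤ 1) : 1 ≤ (√c)⁻¹ :=
  (one_le_inv₀ (Real.sqrt_pos.mpr h0)).mpr (Real.sqrt_le_one.mpr h1)

end

/-- Normalizing variables of variance at most 1 to unit variance cannot decrease the
smallest eigenvalue of the covariance matrix: `λ_min(C) ≤ λ_min(D C D)` where
`D = diag((C_{ii})^{-1/2})`. -/
theorem lambdaMin_le_lambdaMin_correlation {n : ℕ}
    (C : Matrix (Fin n) (Fin n) ℝ) (hC : C.PosSemidef)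
    (hdiag : ∀ i, 0 < C i i ∧ C i i ≤ 1) :
    lambdaMin C ≤
      lambdaMin (Matrix.diagonal (fun i => (Real.sqrt (C i i))⁻¹) * C *
        Matrix.diagonal (fun i => (Real.sqrt (C i i))⁻¹)) := by
  set D : Matrix (Fin n) (Fin n) ℝ := diagonal fun i => (√(C i i))⁻¹
  have hDT : Dᵀ = D := diagonal_transpose _
  rcases isEmpty_or_nonempty (Fin n) with hn | hn
  · rw [Subsingleton.elim (D * C * D) C]
  have hDCD : (D * C * D).IsHermitian := by
    simpa [conjTranspose_eq_transpose_of_trivial, hDT] using isHermitian_conjTranspose_mul_mul D hC.1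
  refine le_lambdaMin_of_forall_mul_dotProduct_self_le hDCD fun x => ?_
  have hD : ∀ i, 1 ≤ |(√(C i i))⁻¹| := fun i =>
    (one_le_inv_sqrt (hdiag i).1 (hdiag i).2).trans (le_abs_self _)
  calc lambdaMin C * (x ⬝ᵥ x)
      ≤ lambdaMin C * ((D *ᵥ x) ⬝ᵥ (D *ᵥ x)) :=
        mul_le_mul_of_nonneg_left (dotProduct_self_le_diagonal_mulVec hD x) hC.lambdaMin_nonneg
    _ ≤ (D *ᵥ x) ⬝ᵥ C *ᵥ (D *ᵥ x) := lambdaMin_mul_dotProduct_self_le hC.1 _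
    _ = x ⬝ᵥ (D * C * D) *ᵥ x := by
      rw [← mulVec_mulVec, ← mulVec_mulVec, dotProduct_mulVec x D, ← mulVec_transpose, hDT]
end

section
/- Let C be a real symmetric positive definite n×n matrix with unit diagonal and b ∈ ℝⁿ, and let 1 ≤ k′ < k ≤ n satisfy (k′+1) · λmin(C,k) ≥ 1. Then max over subsets S of size k′ of R²(S) is at least (∏_{i=k′+1}^{k} (1 − 1/(i · λmin(C,i)))) times the max over subsets S of size k of R²(S). -/
open scoped Matrix

/-! For a set `S` of size `j + 1` maximising `R²`, let `x = C_S⁻¹ b_S`, so that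
`R²(S) = xᵀ C_S x ≥ λmin(C_S) ‖x‖²`. Some coordinate satisfies
`x_m² ≤ ‖x‖² / |S| ≤ R²(S) / (|S| λmin(C_S))`. Zeroing it and using
`R²(T) ≥ 2 wᵀ b_T - wᵀ C_T w` on `T = S \ {m}` gives, because `C_mm = 1`,
`R²(S \ {m}) ≥ R²(S) - x_m²`. So one removal loses at most the factor
`1 - 1 / ((j + 1) λmin(C, j + 1))`; for `j ≥ k'` these factors are nonnegative since
`λmin(C, ·)` is antitone (Cauchy interlacing), and chaining them from `k` down to `k'` gives
the bound. -/

open Matrix Finset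

namespace Matrix

variable {m : Type*} [Fintype m] [DecidableEq m] {A : Matrix m m ℝ}

theorem IsHermitian.lambdaMin_le_eigenvalues (hA : A.IsHermitian) (i : m) :
    lambdaMin A ≤ hA.eigenvalues i := by
  rw [lambdaMin, dif_pos hA]
  exact ciInf_le (Set.finite_range _).bddBelow i

theorem IsHermitian.exists_eigenvalues_eq_lambdaMin [Nonempty m] (hA : A.IsHermitian) :
    ∃ i, hA.eigenvalues i = lambdaMin A := by
  rw [lambdaMin, dif_pos hA]
  exact exists_eq_ciInf_of_finite

theorem IsHermitian.lambdaMin_mul_dotProduct_self_le (hA : A.IsHermitian) (x : m → ℝ) :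
    lambdaMin A * (x ⬝ᵥ x) ≤ x ⬝ᵥ A *ᵥ x := by
  set U : Matrix m m ℝ := ↑hA.eigenvectorUnitary
  set y := star U *ᵥ x
  have hU : ∀ z : m → ℝ, x ⬝ᵥ U *ᵥ z = y ⬝ᵥ z := fun z => by
    rw [dotProduct_mulVec, ← mulVec_transpose, ← conjTranspose_eq_transpose_of_trivial]; rfl
  have hquad : x ⬝ᵥ A *ᵥ x = ∑ j, hA.eigenvalues j * y j ^ 2 := by
    conv_lhs => rw [hA.spectral_theorem, Unitary.conjStarAlgAut_apply]
    rw [← mulVec_mulVec, ← mulVec_mulVec, hU]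
    simp only [dotProduct, mulVec_diagonal, Function.comp_apply, RCLike.ofReal_real_eq_id, id]
    exact sum_congr rfl fun j _ => by ring
  have hnorm : x ⬝ᵥ x = ∑ j, y j ^ 2 := by
    have hUU : U * star U = 1 := mem_unitaryGroup_iff.mp hA.eigenvectorUnitary.2
    have : x ⬝ᵥ x = x ⬝ᵥ U *ᵥ y := by rw [mulVec_mulVec, hUU, one_mulVec]
    rw [this, hU, dotProduct]
    exact sum_congr rfl fun j _ => by ring
  rw [hquad, hnorm, mul_sum]
  exact sum_le_sum fun j _ =>
    mul_le_mul_of_nonneg_right (hA.lambdaMin_le_eigenvalues j) (sq_nonneg _)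

theorem IsHermitian.exists_dotProduct_self_eq_one_lambdaMin [Nonempty m] (hA : A.IsHermitian) :
    ∃ v : m → ℝ, v ⬝ᵥ v = 1 ∧ v ⬝ᵥ A *ᵥ v = lambdaMin A := by
  obtain ⟨i, hi⟩ := hA.exists_eigenvalues_eq_lambdaMin
  set v := (hA.eigenvectorBasis i : m → ℝ)
  have hv : v ⬝ᵥ v = 1 := by
    have hinner := real_inner_self_eq_norm_sq (hA.eigenvectorBasis i)
    rwa [hA.eigenvectorBasis.orthonormal.1 i, one_pow] at hinner
  refine ⟨v, hv, ?_⟩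
  rw [hA.mulVec_eigenvectorBasis i, dotProduct_smul, smul_eq_mul, hv, mul_one, hi]

theorem PosDef.lambdaMin_pos [Nonempty m] (hA : A.PosDef) : 0 < lambdaMin A := by
  obtain ⟨i, hi⟩ := hA.isHermitian.exists_eigenvalues_eq_lambdaMin
  exact hi ▸ hA.eigenvalues_pos i

theorem PosDef.two_mul_dotProduct_sub_le (hA : A.PosDef) (c w : m → ℝ) :
    2 * (w ⬝ᵥ c) - w ⬝ᵥ A *ᵥ w ≤ c ⬝ᵥ A⁻¹ *ᵥ c := by
  set x := A⁻¹ *ᵥ c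
  have hAx : A *ᵥ x = c := by
    rw [mulVec_mulVec, mul_nonsing_inv _ hA.det_pos.ne'.isUnit, one_mulVec]
  have hsymm : x ⬝ᵥ A *ᵥ w = w ⬝ᵥ c := by
    rw [dotProduct_mulVec, ← mulVec_transpose, (isHermitian_iff_isSymm.mp hA.isHermitian).eq,
      hAx, dotProduct_comm]
  have hnonneg := hA.posSemidef.dotProduct_mulVec_nonneg (w - x)
  simp only [star_trivial, mulVec_sub, dotProduct_sub, sub_dotProduct, hAx, hsymm] at hnonneg
  linarith [dotProduct_comm w c, dotProduct_comm x c]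

end Matrix

section PrincipalSubmatrix

variable {ι : Type*} {C : Matrix ι ι ℝ}

theorem subMat_isHermitian (hC : C.IsHermitian) (S : Finset ι) : (subMat C S).IsHermitian :=
  hC.submatrix Subtype.val

theorem subMat_posDef [Fintype ι] (hC : C.PosDef) (S : Finset ι) : (subMat C S).PosDef :=
  hC.submatrix Subtype.val_injective

theorem dotProduct_restrict (S : Finset ι) (v w : ι → ℝ) :
    (fun i : S => v i) ⬝ᵥ (fun i : S => w i) = ∑ i ∈ S, v i * w i :=
  sum_coe_sort S fun i => v i * w i

theorem subMat_mulVec_restrict (S : Finset ι) (v : ι → ℝ) (i : S) :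
    (subMat C S *ᵥ fun j : S => v j) i = ∑ j ∈ S, C i j * v j :=
  sum_coe_sort S fun j => C i j * v j

theorem dotProduct_subMat_mulVec_restrict (S : Finset ι) (v : ι → ℝ) :
    (fun i : S => v i) ⬝ᵥ subMat C S *ᵥ (fun i : S => v i)
      = ∑ i ∈ S, ∑ j ∈ S, v i * C i j * v j := by
  simp_rw [mul_assoc, ← mul_sum]
  rw [← sum_coe_sort S]
  exact sum_congr rfl fun i _ => congrArg (v i * ·) (subMat_mulVec_restrict S v i)

theorem sum_sum_mul_mul_subset {S T : Finset ι} (hST : S ⊆ T) {w : ι → ℝ}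
    (hw : ∀ i ∈ T, i ∉ S → w i = 0) :
    ∑ i ∈ S, ∑ j ∈ S, w i * C i j * w j = ∑ i ∈ T, ∑ j ∈ T, w i * C i j * w j := by
  rw [sum_subset hST fun i hiT hiS => by simp [hw i hiT hiS]]
  exact sum_congr rfl fun i _ => sum_subset hST fun j hjT hjS => by simp [hw j hjT hjS]

variable [DecidableEq ι]

theorem lambdaMin_subMat_mul_sum_sq_le (hC : C.IsHermitian) (S : Finset ι) (v : ι → ℝ) :
    lambdaMin (subMat C S) * ∑ i ∈ S, v i ^ 2 ≤ ∑ i ∈ S, ∑ j ∈ S, v i * C i j * v j := by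
  have := (subMat_isHermitian hC S).lambdaMin_mul_dotProduct_self_le fun i : S => v i
  rw [dotProduct_restrict, dotProduct_subMat_mulVec_restrict] at this
  simpa only [sq] using this

theorem lambdaMin_subMat_le_of_subset [Fintype ι] (hC : C.PosDef) {S T : Finset ι}
    (hS : S.Nonempty) (hST : S ⊆ T) : lambdaMin (subMat C T) ≤ lambdaMin (subMat C S) := by
  have : Nonempty S := hS.to_subtype
  obtain ⟨v, hv, hvC⟩ :=
    (subMat_isHermitian hC.isHermitian S).exists_dotProduct_self_eq_one_lambdaMin
  set w : ι → ℝ := Function.extend Subtype.val v 0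
  have hwv : (fun i : S => w i) = v := funext (Subtype.val_injective.extend_apply v 0)
  have hw : ∀ i ∈ T, i ∉ S → w i = 0 := fun i _ hi =>
    Function.extend_apply' _ _ _ fun ⟨j, hj⟩ => hi (hj ▸ j.2)
  have hnorm : ∑ i ∈ T, w i ^ 2 = 1 := by
    rw [← hwv, dotProduct_restrict] at hv
    rw [← hv, ← sum_subset hST fun i hiT hiS => by simp [hw i hiT hiS]]
    simp only [sq]
  have hquad : ∑ i ∈ T, ∑ j ∈ T, w i * C i j * w j = lambdaMin (subMat C S) := by
    rw [← sum_sum_mul_mul_subset hST hw, ← dotProduct_subMat_mulVec_restrict, hwv, hvC]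
  simpa [hnorm, hquad] using lambdaMin_subMat_mul_sum_sq_le hC.isHermitian T w

theorem sum_sum_mul_mul_erase (hC : C.IsSymm) {S : Finset ι} {m : ι} (hm : m ∈ S)
    (x : ι → ℝ) :
    ∑ i ∈ S.erase m, ∑ j ∈ S.erase m, x i * C i j * x j
      = ∑ i ∈ S, ∑ j ∈ S, x i * C i j * x j - 2 * x m * ∑ j ∈ S, C m j * x j
        + C m m * x m ^ 2 := by
  have hcol : ∑ i ∈ S, x i * C i m * x m = x m * ∑ j ∈ S, C m j * x j := by
    rw [mul_sum]
    exact sum_congr rfl fun i _ => by rw [hC.apply m i]; ring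
  have hrow : ∑ j ∈ S, x m * C m j * x j = x m * ∑ j ∈ S, C m j * x j := by
    rw [mul_sum]
    exact sum_congr rfl fun j _ => by ring
  simp only [sum_erase_eq_sub hm, sum_sub_distrib, hcol, hrow]
  ring

end PrincipalSubmatrix

section R2

variable {ι : Type*} [Fintype ι] [DecidableEq ι] {C : Matrix ι ι ℝ}

theorem two_mul_sum_sub_le_R2 (hC : C.PosDef) (b : ι → ℝ) (S : Finset ι) (v : ι → ℝ) :
    2 * ∑ i ∈ S, v i * b i - ∑ i ∈ S, ∑ j ∈ S, v i * C i j * v j ≤ R2 C b S := by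
  have := (subMat_posDef hC S).two_mul_dotProduct_sub_le (fun i : S => b i) (fun i : S => v i)
  rwa [dotProduct_restrict, dotProduct_subMat_mulVec_restrict] at this

theorem R2_nonneg (hC : C.PosDef) (b : ι → ℝ) (S : Finset ι) : 0 ≤ R2 C b S := by
  simpa using two_mul_sum_sub_le_R2 hC b S 0

theorem exists_normal_equations_R2_eq (hC : C.PosDef) (b : ι → ℝ) (S : Finset ι) :
    ∃ x : ι → ℝ, (∀ i ∈ S, ∑ j ∈ S, C i j * x j = b i) ∧ R2 C b S = ∑ i ∈ S, x i * b i := by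
  set x : S → ℝ := (subMat C S)⁻¹ *ᵥ fun i : S => b i
  have hx : subMat C S *ᵥ x = fun i : S => b i := by
    rw [mulVec_mulVec, mul_nonsing_inv _ (subMat_posDef hC S).det_pos.ne'.isUnit, one_mulVec]
  set y : ι → ℝ := Function.extend Subtype.val x 0
  have hyx : (fun i : S => y i) = x := funext (Subtype.val_injective.extend_apply x 0)
  refine ⟨y, fun i hi => ?_, ?_⟩
  · rw [← subMat_mulVec_restrict S y ⟨i, hi⟩, hyx, hx]
  · rw [← dotProduct_restrict, hyx, dotProduct_comm]
    rfl

theorem exists_mem_mul_R2_le_R2_erase (hC : C.PosDef) (hdiag : ∀ i, C i i = 1) (b : ι → ℝ)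
    {S : Finset ι} (hS : S.Nonempty) :
    ∃ m ∈ S, (1 - 1 / (#S * lambdaMin (subMat C S))) * R2 C b S ≤ R2 C b (S.erase m) := by
  have : Nonempty S := hS.to_subtype
  obtain ⟨x, hx, hR⟩ := exists_normal_equations_R2_eq hC b S
  set R := R2 C b S
  set lam := lambdaMin (subMat C S)
  have hquad : ∑ i ∈ S, ∑ j ∈ S, x i * C i j * x j = R := by
    rw [hR]
    refine sum_congr rfl fun i hi => ?_
    rw [← hx i hi, mul_sum]
    exact sum_congr rfl fun j _ => by ring
  have hlam : 0 < lam := (subMat_posDef hC S).lambdaMin_pos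
  have hray : lam * ∑ i ∈ S, x i ^ 2 ≤ R := hquad ▸ lambdaMin_subMat_mul_sum_sq_le hC.1 S x
  obtain ⟨m, hm, hxm⟩ : ∃ m ∈ S, #S * x m ^ 2 ≤ ∑ i ∈ S, x i ^ 2 :=
    exists_le_of_sum_le hS (by rw [← mul_sum, sum_const, nsmul_eq_mul])
  refine ⟨m, hm, ?_⟩
  have herase : R - x m ^ 2 ≤ R2 C b (S.erase m) := by
    have := two_mul_sum_sub_le_R2 hC b (S.erase m) x
    rw [sum_sum_mul_mul_erase (isHermitian_iff_isSymm.mp hC.1) hm, hquad, hx m hm, hdiag,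
      sum_erase_eq_sub hm, ← hR] at this
    linarith
  have hsmall : x m ^ 2 ≤ R / (#S * lam) := by
    rw [le_div_iff₀ (by positivity)]
    nlinarith
  calc (1 - 1 / (#S * lam)) * R = R - R / (#S * lam) := by ring
    _ ≤ R - x m ^ 2 := by linarith
    _ ≤ R2 C b (S.erase m) := herase

end R2

theorem prod_Icc_mul_le_of_forall_mul_le {f M : ℕ → ℝ} {a k : ℕ} (hak : a ≤ k)
    (hf : ∀ i ∈ Icc (a + 1) k, 0 ≤ f i)
    (hM : ∀ j, a ≤ j → j < k → f (j + 1) * M (j + 1) ≤ M j) :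
    (∏ i ∈ Icc (a + 1) k, f i) * M k ≤ M a := by
  induction k, hak using Nat.le_induction with
  | base => simp
  | succ k hak ih =>
    have hP : 0 ≤ ∏ i ∈ Icc (a + 1) k, f i :=
      prod_nonneg fun i hi => hf i (Icc_subset_Icc_right k.le_succ hi)
    calc (∏ i ∈ Icc (a + 1) (k + 1), f i) * M (k + 1)
        = (∏ i ∈ Icc (a + 1) k, f i) * (f (k + 1) * M (k + 1)) := by
          rw [prod_Icc_succ_top (by omega), mul_assoc]
      _ ≤ (∏ i ∈ Icc (a + 1) k, f i) * M k :=
          mul_le_mul_of_nonneg_left (hM k hak k.lt_succ_self) hP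
      _ ≤ M a :=
          ih (fun i hi => hf i (Icc_subset_Icc_right k.le_succ hi))
            fun j hj hjk => hM j hj (by omega)

section CardinalityConstrained

variable {n : ℕ} {C : Matrix (Fin n) (Fin n) ℝ}

/-- `max_{|S| = k} R²(S)`; for `k > n` the set is empty and this is the junk value `0`. -/
noncomputable def optR2 (C : Matrix (Fin n) (Fin n) ℝ) (b : Fin n → ℝ) (k : ℕ) : ℝ :=
  sSup {x | ∃ S : Finset (Fin n), S.card = k ∧ x = R2 C b S}

theorem finite_setOf_card_eq (f : Finset (Fin n) → ℝ) (k : ℕ) :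
    {x | ∃ S : Finset (Fin n), S.card = k ∧ x = f S}.Finite :=
  (Set.finite_range f).subset fun _ ⟨S, _, hx⟩ => ⟨S, hx.symm⟩

theorem nonempty_setOf_card_eq (f : Finset (Fin n) → ℝ) {k : ℕ} (hk : k ≤ n) :
    {x | ∃ S : Finset (Fin n), S.card = k ∧ x = f S}.Nonempty := by
  obtain ⟨S, -, hS⟩ := exists_subset_card_eq (s := (univ : Finset (Fin n))) (by simpa using hk)
  exact ⟨f S, S, hS, rfl⟩

theorem lambdaMinK_card_le (S : Finset (Fin n)) : lambdaMinK C #S ≤ lambdaMin (subMat C S) :=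
  csInf_le (finite_setOf_card_eq _ _).bddBelow ⟨S, rfl, rfl⟩

theorem lambdaMinK_pos (hC : C.PosDef) {k : ℕ} (hk : 1 ≤ k) (hkn : k ≤ n) :
    0 < lambdaMinK C k := by
  obtain ⟨S, hS, hmin⟩ :
      lambdaMinK C k ∈ {x | ∃ S : Finset (Fin n), #S = k ∧ x = lambdaMin (subMat C S)} :=
    (nonempty_setOf_card_eq _ hkn).csInf_mem (finite_setOf_card_eq _ _)
  have : Nonempty S := (card_pos.mp (by omega)).to_subtype
  exact hmin ▸ (subMat_posDef hC S).lambdaMin_pos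

theorem lambdaMinK_le_of_le (hC : C.PosDef) {i k : ℕ} (hi : 1 ≤ i) (hik : i ≤ k) (hkn : k ≤ n) :
    lambdaMinK C k ≤ lambdaMinK C i := by
  refine le_csInf (nonempty_setOf_card_eq _ (hik.trans hkn)) ?_
  rintro _ ⟨S, rfl, rfl⟩
  obtain ⟨T, hST, rfl⟩ := exists_superset_card_eq hik (by simpa using hkn)
  exact (lambdaMinK_card_le T).trans
    (lambdaMin_subMat_le_of_subset hC (card_pos.mp hi) hST)

theorem mul_optR2_succ_le (hC : C.PosDef) (hdiag : ∀ i, C i i = 1) (b : Fin n → ℝ) {j : ℕ}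
    (hj : j + 1 ≤ n) :
    (1 - 1 / (((j + 1 : ℕ) : ℝ) * lambdaMinK C (j + 1))) * optR2 C b (j + 1) ≤ optR2 C b j := by
  obtain ⟨S, hS, hmax⟩ :
      optR2 C b (j + 1) ∈ {x | ∃ S : Finset (Fin n), #S = j + 1 ∧ x = R2 C b S} :=
    (nonempty_setOf_card_eq _ hj).csSup_mem (finite_setOf_card_eq _ _)
  obtain ⟨m, hm, hle⟩ := exists_mem_mul_R2_le_R2_erase hC hdiag b
    (card_pos.mp (by omega : 0 < #S))
  have hfactor : 1 - 1 / (((j + 1 : ℕ) : ℝ) * lambdaMinK C (j + 1))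
      ≤ 1 - 1 / (#S * lambdaMin (subMat C S)) := by
    have hpos : 0 < (#S : ℝ) * lambdaMinK C #S :=
      mul_pos (Nat.cast_pos.mpr (by omega)) (hS ▸ lambdaMinK_pos hC (by omega) hj)
    rw [← hS]
    exact sub_le_sub_left (one_div_le_one_div_of_le hpos
      (mul_le_mul_of_nonneg_left (lambdaMinK_card_le S) (Nat.cast_nonneg _))) 1
  calc (1 - 1 / (((j + 1 : ℕ) : ℝ) * lambdaMinK C (j + 1))) * optR2 C b (j + 1)
      ≤ (1 - 1 / (#S * lambdaMin (subMat C S))) * R2 C b S := by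
        rw [hmax]; exact mul_le_mul_of_nonneg_right hfactor (R2_nonneg hC b S)
    _ ≤ R2 C b (S.erase m) := hle
    _ ≤ optR2 C b j :=
        le_csSup (finite_setOf_card_eq _ _).bddAbove
          ⟨S.erase m, by rw [card_erase_of_mem hm, hS, Nat.add_sub_cancel], rfl⟩

end CardinalityConstrained

theorem opt_R2_card_shrink_bound_general {n k k' : ℕ}
    (C : Matrix (Fin n) (Fin n) ℝ) (b : Fin n → ℝ) (hC : C.PosDef)
    (hdiag : ∀ i, C i i = 1) (hk'k : k' < k) (hkn : k ≤ n)
    (hlam : 1 ≤ (k' + 1 : ℝ) * lambdaMinK C k) :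
    (∏ i ∈ Finset.Icc (k' + 1) k, (1 - 1 / (i * lambdaMinK C i))) *
        sSup {x | ∃ S : Finset (Fin n), S.card = k ∧ x = R2 C b S} ≤
      sSup {x | ∃ S : Finset (Fin n), S.card = k' ∧ x = R2 C b S} := by
  have hfactor : ∀ i ∈ Icc (k' + 1) k, 0 ≤ 1 - 1 / ((i : ℝ) * lambdaMinK C i) := by
    intro i hi
    obtain ⟨hk'i, hik⟩ := mem_Icc.mp hi
    have hone : 1 ≤ (i : ℝ) * lambdaMinK C i :=
      hlam.trans (mul_le_mul (by exact_mod_cast hk'i) (lambdaMinK_le_of_le hC (by omega) hik hkn)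
        (lambdaMinK_pos hC (by omega) hkn).le (Nat.cast_nonneg i))
    exact sub_nonneg.mpr ((div_le_one (one_pos.trans_le hone)).mpr hone)
  exact prod_Icc_mul_le_of_forall_mul_le (M := optR2 C b) hk'k.le hfactor
    fun j _ hjk => mul_optR2_succ_le hC hdiag b (hjk.trans_le hkn)

/-- The best `R²` over subsets of size `k′` is at least
`∏_{i=k′+1}^{k} (1 − 1/(i · λmin(C,i)))` times the best `R²` over subsets of size `k`,
provided `(k′+1) · λmin(C,k) ≥ 1`. -/
theorem opt_R2_card_shrink_bound {n k k' : ℕ}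
    (C : Matrix (Fin n) (Fin n) ℝ) (b : Fin n → ℝ) (hC : C.PosDef)
    (hdiag : ∀ i, C i i = 1) (hk' : 1 ≤ k') (hk'k : k' < k) (hkn : k ≤ n)
    (hlam : 1 ≤ (k' + 1 : ℝ) * lambdaMinK C k) :
    (∏ i ∈ Finset.Icc (k' + 1) k, (1 - 1 / (i * lambdaMinK C i))) *
        sSup {x | ∃ S : Finset (Fin n), S.card = k ∧ x = R2 C b S} ≤
      sSup {x | ∃ S : Finset (Fin n), S.card = k' ∧ x = R2 C b S} :=
  opt_R2_card_shrink_bound_general C b hC hdiag hk'k hkn hlam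
end
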